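/- Let T be an equimeasurable map on symmetrizable functions on ℝⁿ such that φ(Tf) = T(φ∘f) almost everywhere whenever f is symmetrizable and φ : ℝ → ℝ is right-continuous and increasing. Then T is monotonic: f ≤ g a.e. implies Tf ≤ Tg a.e. -/

import Mathlib

open MeasureTheory Set

/-- The essential infimum of a real-valued function, computed in `EReal`. -/
noncomputable def essInfE {n : ℕ} (f : EuclideanSpace ℝ (Fin n) → ℝ) : EReal :=
  essInf (fun x => (f x : EReal)) volume

/-- A function `f : ℝⁿ → ℝ` is symmetrizable if it is measurable and every
super-level set `{x | f x > t}` with `t > essinf f` has finite Lebesgue measure. -/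
def Symmetrizable {n : ℕ} (f : EuclideanSpace ℝ (Fin n) → ℝ) : Prop :=
  Measurable f ∧ ∀ t : ℝ, essInfE f < (t : EReal) → volume {x | t < f x} < ⊤

/-!
Composing with the right-continuous step `1_{[q, ∞)}` turns a function into the indicator of
its level set `{f ≥ q}`, and `T` commutes with it, so `Tf ≤ Tg` reduces to `T 1_A ≤ T 1_B` for
level sets `A ⊆ B` (up to a null set). Each `T 1_S` is again an indicator `1_V`, with
`|V| = |S|` by equimeasurability. For `A ⊆ B` exactly, apply the steps at `2` and at `1` to
`1_A + 1_B`. A null difference `B \ A` is invisible to `T` when `|B| < ∞`, because the two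
image sets are nested and have the same finite measure. When `|B| = ∞`, `B` is conull and
`T 1_B - 1 = T (1_B - 1)` is a symmetrizable function with an infinite super-level set at
`-1/2`, which forces `T 1_B = 1` a.e.
-/

section Step

lemma monotone_indicator_Ici_one (q : ℝ) : Monotone ((Ici q).indicator (1 : ℝ → ℝ)) := by
  intro a b hab
  refine indicator_apply_le' (fun ha => ?_) fun _ => indicator_nonneg (fun _ _ => zero_le_one) b
  rw [indicator_of_mem (mem_Ici.2 ((mem_Ici.1 ha).trans hab))]
  exact le_rfl

lemma continuousWithinAt_indicator_Ici_one (q a : ℝ) :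
    ContinuousWithinAt ((Ici q).indicator (1 : ℝ → ℝ)) (Ici a) a := by
  by_cases h : q ≤ a
  · refine (continuousWithinAt_const (b := (1 : ℝ))).congr (fun x hx => ?_) ?_
    · exact indicator_of_mem (mem_Ici.2 (h.trans hx)) _
    · exact indicator_of_mem (mem_Ici.2 h) _
  · refine ((continuousAt_const (y := (0 : ℝ))).congr ?_).continuousWithinAt
    filter_upwards [Iio_mem_nhds (not_le.1 h)] with x hx
    exact (indicator_of_notMem (notMem_Ici.2 hx) _).symm

lemma indicator_one_preimage_Ici_one {α : Type*} (S : Set α) :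
    S.indicator (1 : α → ℝ) ⁻¹' Ici 1 = S := by
  ext x
  by_cases hx : x ∈ S <;> simp [hx]

end Step

section Symmetrizable

variable {n : ℕ} {f : EuclideanSpace ℝ (Fin n) → ℝ}

lemma Symmetrizable.of_ae_le (hm : Measurable f) {c : ℝ} (hc : ∀ᵐ x, c ≤ f x)
    (hfin : ∀ t, c < t → volume {x | t < f x} < ⊤) : Symmetrizable f := by
  refine ⟨hm, fun t ht => hfin t (EReal.coe_lt_coe_iff.1 (lt_of_le_of_lt ?_ ht))⟩
  exact le_essInf_of_ae_le _ (hc.mono fun x hx => EReal.coe_le_coe_iff.2 hx)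

lemma ae_le_of_le_essInfE {t : ℝ} (h : (t : EReal) ≤ essInfE f) : ∀ᵐ x, t ≤ f x := by
  filter_upwards [ae_essInf_le (f := fun x => (f x : EReal)) (μ := volume)] with x hx
  exact EReal.coe_le_coe_iff.1 (h.trans hx)

lemma Symmetrizable.ae_le_of_volume_eq_top (hf : Symmetrizable f) {t : ℝ}
    (ht : volume {x | t < f x} = ⊤) : ∀ᵐ x, t ≤ f x :=
  ae_le_of_le_essInfE (not_lt.1 fun h => (hf.2 t h).ne ht)

lemma Symmetrizable.volume_preimage_Ici_lt_top_or_ae_le (hf : Symmetrizable f) (q : ℝ) :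
    volume (f ⁻¹' Ici q) < ⊤ ∨ ∀ᵐ x, q ≤ f x := by
  by_cases h : essInfE f < q
  · obtain ⟨t, hft, htq⟩ := EReal.exists_between_coe_real h
    refine Or.inl (lt_of_le_of_lt (measure_mono fun x hx => ?_) (hf.2 t hft))
    exact (EReal.coe_lt_coe_iff.1 htq).trans_le hx
  · exact Or.inr (ae_le_of_le_essInfE (not_lt.1 h))

lemma symmetrizable_indicator_one {S : Set (EuclideanSpace ℝ (Fin n))} (hS : MeasurableSet S)
    (h : volume S < ⊤ ∨ ∀ᵐ x, x ∈ S) : Symmetrizable (S.indicator 1) := by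
  have hm : Measurable (S.indicator (1 : EuclideanSpace ℝ (Fin n) → ℝ)) :=
    (measurable_indicator_const_iff 1).2 hS
  rcases h with hfin | hae
  · refine .of_ae_le hm (.of_forall fun x => indicator_nonneg (fun _ _ => zero_le_one) x)
      fun t ht => lt_of_le_of_lt (measure_mono fun x hx => ?_) hfin
    by_contra hxS
    exact (not_lt.2 ht.le) (by simpa [hxS] using hx)
  · refine .of_ae_le (c := 1) hm (hae.mono fun x hx => by simp [hx]) fun t ht => ?_
    have : {x | t < S.indicator 1 x} = ∅ :=
      eq_empty_of_forall_notMem fun x hx =>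
        (not_lt.2 ht.le) (lt_of_lt_of_le hx (indicator_apply_le' (fun _ => le_rfl)
          fun _ => zero_le_one))
    simp [this]

lemma Symmetrizable.measurableSet_of_indicator {S : Set (EuclideanSpace ℝ (Fin n))}
    (hS : Symmetrizable (S.indicator 1)) : MeasurableSet S :=
  (measurable_indicator_const_iff 1).1 hS.1

lemma Symmetrizable.indicator_preimage_Ici (hf : Symmetrizable f) (q : ℝ) :
    Symmetrizable ((f ⁻¹' Ici q).indicator 1) :=
  symmetrizable_indicator_one (hf.1 measurableSet_Ici) (hf.volume_preimage_Ici_lt_top_or_ae_le q)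

end Symmetrizable

section Operator

variable {n : ℕ}

def PreservesSymmetrizable (T : (EuclideanSpace ℝ (Fin n) → ℝ) → EuclideanSpace ℝ (Fin n) → ℝ) :
    Prop :=
  ∀ f, Symmetrizable f → Symmetrizable (T f)

def IsEquimeasurable (T : (EuclideanSpace ℝ (Fin n) → ℝ) → EuclideanSpace ℝ (Fin n) → ℝ) : Prop :=
  ∀ f, Symmetrizable f → ∀ t : ℝ, volume {x | t < T f x} = volume {x | t < f x}

def CommutesWithRightContinuousMonotone
    (T : (EuclideanSpace ℝ (Fin n) → ℝ) → EuclideanSpace ℝ (Fin n) → ℝ) : Prop :=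
  ∀ f, Symmetrizable f → ∀ φ : ℝ → ℝ, Monotone φ → (∀ a : ℝ, ContinuousWithinAt φ (Ici a) a) →
    (fun x => φ (T f x)) =ᵐ[volume] T (fun x => φ (f x))

variable {T : (EuclideanSpace ℝ (Fin n) → ℝ) → EuclideanSpace ℝ (Fin n) → ℝ}
  {f : EuclideanSpace ℝ (Fin n) → ℝ} {A B S : Set (EuclideanSpace ℝ (Fin n))}

lemma CommutesWithRightContinuousMonotone.indicator_preimage_Ici
    (hcomm : CommutesWithRightContinuousMonotone T) (hf : Symmetrizable f) (q : ℝ) :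
    (T f ⁻¹' Ici q).indicator 1 =ᵐ[volume] T ((f ⁻¹' Ici q).indicator 1) := by
  have h := hcomm f hf _ (monotone_indicator_Ici_one q) (continuousWithinAt_indicator_Ici_one q)
  simp only [← indicator_comp_right, Pi.one_comp] at h
  exact h

lemma CommutesWithRightContinuousMonotone.apply_indicator_ae_eq
    (hcomm : CommutesWithRightContinuousMonotone T) (hS : Symmetrizable (S.indicator 1)) :
    T (S.indicator 1) =ᵐ[volume] (T (S.indicator 1) ⁻¹' Ici 1).indicator 1 := by
  have h := hcomm.indicator_preimage_Ici hS 1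
  rw [indicator_one_preimage_Ici_one] at h
  exact h.symm

lemma IsEquimeasurable.volume_preimage_Ici_one (hequi : IsEquimeasurable T)
    (hcomm : CommutesWithRightContinuousMonotone T) (hS : Symmetrizable (S.indicator 1)) :
    volume (T (S.indicator 1) ⁻¹' Ici 1) = volume S := by
  have hhalf : ∀ V : Set (EuclideanSpace ℝ (Fin n)), {x | (1 / 2 : ℝ) < V.indicator 1 x} = V := by
    intro V
    ext x
    by_cases hx : x ∈ V <;> norm_num [hx]
  set V := T (S.indicator 1) ⁻¹' Ici 1
  have hV : {x | (1 / 2 : ℝ) < T (S.indicator 1) x} =ᵐ[volume] V := by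
    rw [← hhalf V]
    filter_upwards [hcomm.apply_indicator_ae_eq hS] with x hx
    change ((1 / 2 : ℝ) < T (S.indicator 1) x) = ((1 / 2 : ℝ) < V.indicator 1 x)
    rw [hx]
  calc volume V
      = volume {x | (1 / 2 : ℝ) < T (S.indicator 1) x} := (measure_congr hV).symm
    _ = volume S := by rw [hequi _ hS, hhalf]

lemma CommutesWithRightContinuousMonotone.apply_indicator_le_of_subset
    (hcomm : CommutesWithRightContinuousMonotone T) (hA : MeasurableSet A) (hB : MeasurableSet B)
    (hAB : A ⊆ B) (hB_fin : volume B < ⊤) :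
    T (A.indicator 1) ≤ᵐ[volume] T (B.indicator 1) := by
  set u : EuclideanSpace ℝ (Fin n) → ℝ := A.indicator 1 + B.indicator 1
  have hu : Symmetrizable u := by
    refine .of_ae_le (c := 0) (((measurable_indicator_const_iff 1).2 hA).add
      ((measurable_indicator_const_iff 1).2 hB)) (.of_forall fun x => ?_)
      fun t ht => lt_of_le_of_lt (measure_mono fun x hx => ?_) hB_fin
    · by_cases hxA : x ∈ A <;> by_cases hxB : x ∈ B <;> simp [u, hxA, hxB]
    · by_contra hxB
      have hxA : x ∉ A := fun hxA => hxB (hAB hxA)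
      simp [u, hxA, hxB] at hx
      linarith
  have h_two : u ⁻¹' Ici 2 = A := by
    ext x
    by_cases hxA : x ∈ A
    · simp [u, hxA, hAB hxA]; norm_num
    · by_cases hxB : x ∈ B <;> simp [u, hxA, hxB]
  have h_one : u ⁻¹' Ici 1 = B := by
    ext x
    by_cases hxB : x ∈ B
    · by_cases hxA : x ∈ A <;> simp [u, hxA, hxB]
    · simp [u, hxB, show x ∉ A from fun hxA => hxB (hAB hxA)]
  have h_mono : (T u ⁻¹' Ici 2).indicator (1 : EuclideanSpace ℝ (Fin n) → ℝ) ≤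
      (T u ⁻¹' Ici 1).indicator 1 :=
    indicator_le_indicator_of_subset (preimage_mono (Ici_subset_Ici.2 one_le_two))
      fun _ => zero_le_one
  rw [← h_two, ← h_one]
  exact ((hcomm.indicator_preimage_Ici hu 2).symm.trans_le (.of_forall h_mono)).trans_eq
    (hcomm.indicator_preimage_Ici hu 1)

lemma apply_indicator_ae_eq_one_of_volume_eq_top (hmap : PreservesSymmetrizable T)
    (hequi : IsEquimeasurable T) (hcomm : CommutesWithRightContinuousMonotone T)
    (hS : Symmetrizable (S.indicator 1)) (hS_top : volume S = ⊤) :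
    T (S.indicator 1) =ᵐ[volume] 1 := by
  have hS_ae : ∀ᵐ x, (1 : ℝ) ≤ S.indicator 1 x := by
    simpa [indicator_one_preimage_Ici_one, hS_top] using hS.volume_preimage_Ici_lt_top_or_ae_le 1
  set w : EuclideanSpace ℝ (Fin n) → ℝ := fun x => S.indicator 1 x - 1
  have hw_nonpos : ∀ x, w x ≤ 0 := fun x =>
    sub_nonpos.2 (indicator_apply_le' (fun _ => le_rfl) fun _ => zero_le_one)
  have hw : Symmetrizable w := by
    refine .of_ae_le (c := 0) (hS.1.sub_const 1) (hS_ae.mono fun x hx => sub_nonneg.2 hx)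
      fun t ht => ?_
    have : {x | t < w x} = ∅ :=
      eq_empty_of_forall_notMem fun x hx => (lt_irrefl t) ((hx.trans_le (hw_nonpos x)).trans ht)
    simp [this]
  have hTw : (fun x => T (S.indicator 1) x - 1) =ᵐ[volume] T w :=
    hcomm _ hS (· - 1) (fun a b hab => sub_le_sub_right hab 1)
      fun a => (continuous_sub_right 1).continuousWithinAt
  have hTw_top : volume {x | (-1 / 2 : ℝ) < T w x} = ⊤ := by
    rw [hequi w hw, ← top_le_iff, ← hS_top]
    exact measure_mono fun x hx => by norm_num [w, hx]
  filter_upwards [hcomm.apply_indicator_ae_eq hS, hTw,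
    (hmap w hw).ae_le_of_volume_eq_top hTw_top] with x h_ind h_sub h_half
  rw [← h_sub, h_ind] at h_half
  rw [h_ind]
  by_cases hx : x ∈ T (S.indicator 1) ⁻¹' Ici 1
  · simp [hx]
  · simp [hx] at h_half
    norm_num at h_half

lemma apply_indicator_ae_eq_of_subset (hmap : PreservesSymmetrizable T)
    (hequi : IsEquimeasurable T) (hcomm : CommutesWithRightContinuousMonotone T)
    (hA : Symmetrizable (A.indicator 1)) (hB : Symmetrizable (B.indicator 1)) (hAB : A ⊆ B)
    (hBA : B ≤ᵐ[volume] A) (hB_fin : volume B < ⊤) :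
    T (A.indicator 1) =ᵐ[volume] T (B.indicator 1) := by
  set V := T (A.indicator 1) ⁻¹' Ici 1
  set W := T (B.indicator 1) ⁻¹' Ici 1
  have hVW : V ≤ᵐ[volume] W := by
    filter_upwards [hcomm.apply_indicator_le_of_subset hA.measurableSet_of_indicator
      hB.measurableSet_of_indicator hAB hB_fin] with x hle hxV
    exact (show (1 : ℝ) ≤ T (A.indicator 1) x from hxV).trans hle
  have hW : volume W = volume B := hequi.volume_preimage_Ici_one hcomm hB
  have hV : volume V = volume B := by
    rw [hequi.volume_preimage_Ici_one hcomm hA, measure_congr (hAB.eventuallyLE.antisymm hBA)]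
  have hVW_eq : V =ᵐ[volume] W := ae_eq_of_ae_subset_of_measure_ge hVW (by rw [hV, hW])
    ((hmap _ hA).1 measurableSet_Ici).nullMeasurableSet (hW ▸ hB_fin.ne)
  exact (hcomm.apply_indicator_ae_eq hA).trans
    ((indicator_ae_eq_of_ae_eq_set hVW_eq).trans (hcomm.apply_indicator_ae_eq hB).symm)

lemma apply_indicator_mono (hmap : PreservesSymmetrizable T) (hequi : IsEquimeasurable T)
    (hcomm : CommutesWithRightContinuousMonotone T) (hA : Symmetrizable (A.indicator 1))
    (hB : Symmetrizable (B.indicator 1)) (hAB : A ≤ᵐ[volume] B) :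
    T (A.indicator 1) ≤ᵐ[volume] T (B.indicator 1) := by
  have hA_meas := hA.measurableSet_of_indicator
  have hB_meas := hB.measurableSet_of_indicator
  rcases eq_top_or_lt_top (volume B) with hB_top | hB_fin
  · filter_upwards [apply_indicator_ae_eq_one_of_volume_eq_top hmap hequi hcomm hB hB_top,
      hcomm.apply_indicator_ae_eq hA] with x h_one h_ind
    rw [h_one, h_ind]
    exact indicator_apply_le' (fun _ => le_rfl) fun _ => zero_le_one
  · have hC_ae : (A ∪ B : Set (EuclideanSpace ℝ (Fin n))) =ᵐ[volume] B :=
      union_ae_eq_right.2 (ae_le_set.1 hAB)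
    have hC_fin : volume (A ∪ B) < ⊤ := by rwa [measure_congr hC_ae]
    have hC : Symmetrizable ((A ∪ B).indicator 1) :=
      symmetrizable_indicator_one (hA_meas.union hB_meas) (.inl hC_fin)
    exact (hcomm.apply_indicator_le_of_subset hA_meas (hA_meas.union hB_meas) subset_union_left
      hC_fin).trans_eq (apply_indicator_ae_eq_of_subset hmap hequi hcomm hB hC subset_union_right
        hC_ae.le hC_fin).symm

end Operator

theorem stmt_7 {n : ℕ}
    (T : (EuclideanSpace ℝ (Fin n) → ℝ) → (EuclideanSpace ℝ (Fin n) → ℝ))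
    (hmap : ∀ f, Symmetrizable f → Symmetrizable (T f))
    (hequi : ∀ f, Symmetrizable f → ∀ t : ℝ,
      volume {x | t < T f x} = volume {x | t < f x})
    (hcomm : ∀ f, Symmetrizable f → ∀ φ : ℝ → ℝ, Monotone φ →
      (∀ a : ℝ, ContinuousWithinAt φ (Ici a) a) →
      (fun x => φ (T f x)) =ᵐ[volume] T (fun x => φ (f x))) :
    ∀ f g, Symmetrizable f → Symmetrizable g →
      f ≤ᵐ[volume] g → T f ≤ᵐ[volume] T g := by
  intro f g hf hg hfg
  have h_level : ∀ q : ℚ, (T f ⁻¹' Ici (q : ℝ)).indicator (1 : EuclideanSpace ℝ (Fin n) → ℝ)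
      ≤ᵐ[volume] (T g ⁻¹' Ici (q : ℝ)).indicator 1 := fun q =>
    ((CommutesWithRightContinuousMonotone.indicator_preimage_Ici hcomm hf q).trans_le
      (apply_indicator_mono hmap hequi hcomm (hf.indicator_preimage_Ici q)
        (hg.indicator_preimage_Ici q) (hfg.mono fun _ hx hxq => le_trans hxq hx))).trans_eq
      (CommutesWithRightContinuousMonotone.indicator_preimage_Ici hcomm hg q).symm
  filter_upwards [ae_all_iff.2 h_level] with x hx
  refine le_of_forall_rat_lt_imp_le fun q hq => ?_
  have h := hx q
  rw [indicator_of_mem (show x ∈ T f ⁻¹' Ici (q : ℝ) from hq.le)] at h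
  exact mem_of_indicator_ne_zero (s := T g ⁻¹' Ici (q : ℝ)) (one_pos.trans_le h).ne'
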